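/- arXiv:2411.14027 — 3 statements merged into one kernel-verified Lean document; each statement's English description precedes it below -/
import Mathlib

section
/- The idempotent semilattice E(S_{G,Λ}) of the inverse semigroup S_{G,Λ} associated to a self-similar k-graph (G,Λ) consists exactly of the finite subsets F of {(μ, e_G, μ) : μ ∈ Λ} such that Λ^min(μ,ν) = ∅ for all distinct (μ,e_G,μ), (ν,e_G,ν) ∈ F. In particular E(S_{G,Λ}) does not depend on the group G. -/
/-- A `k`-graph: a countable small category with degree functor to `ℕ^k`
satisfying the unique factorization property.  Objects (vertices) are
identified with the paths of degree `0`. -/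
structure KGraph (k : ℕ) where
  Path : Type
  countable : Countable Path
  src : Path → Path
  rng : Path → Path
  deg : Path → Fin k → ℕ
  comp : (μ ν : Path) → src μ = rng ν → Path
  deg_src : ∀ μ, deg (src μ) = 0
  deg_rng : ∀ μ, deg (rng μ) = 0
  src_vtx : ∀ μ, deg μ = 0 → src μ = μ
  rng_vtx : ∀ μ, deg μ = 0 → rng μ = μ
  src_comp : ∀ μ ν h, src (comp μ ν h) = src ν
  rng_comp : ∀ μ ν h, rng (comp μ ν h) = rng μ
  deg_comp : ∀ μ ν h, deg (comp μ ν h) = deg μ + deg ν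
  comp_assoc : ∀ μ ν ρ (h1 : src μ = rng ν) (h2 : src (comp μ ν h1) = rng ρ)
    (h3 : src ν = rng ρ) (h4 : src μ = rng (comp ν ρ h3)),
    comp (comp μ ν h1) ρ h2 = comp μ (comp ν ρ h3) h4
  rng_id_comp : ∀ μ (h : src (rng μ) = rng μ), comp (rng μ) μ h = μ
  comp_src_id : ∀ μ (h : src μ = rng (src μ)), comp μ (src μ) h = μ
  factor : ∀ μ (m n : Fin k → ℕ), deg μ = m + n →
    ∃! p : Path × Path, ∃ h : src p.1 = rng p.2,
      deg p.1 = m ∧ deg p.2 = n ∧ comp p.1 p.2 h = μ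

namespace KGraph

variable {k : ℕ}

/-- The set `Λ^min(μ,ν)` of pairs `(α,β)` with `μα = νβ` a minimal common
extension of `μ` and `ν`. -/
def lmin (Λ : KGraph k) (μ ν : Λ.Path) : Set (Λ.Path × Λ.Path) :=
  {p | ∃ (h1 : Λ.src μ = Λ.rng p.1) (h2 : Λ.src ν = Λ.rng p.2),
    Λ.comp μ p.1 h1 = Λ.comp ν p.2 h2 ∧
    Λ.deg μ + Λ.deg p.1 = Λ.deg μ ⊔ Λ.deg ν}

/-- `Λ` is finitely aligned when every `Λ^min(μ,ν)` is finite. -/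
def FinitelyAligned (Λ : KGraph k) : Prop := ∀ μ ν : Λ.Path, (Λ.lmin μ ν).Finite

/-- `X ⊆ vΛ` is exhaustive: every path with range `v` has a minimal common
extension with some member of `X`. -/
def Exhaustive (Λ : KGraph k) (v : Λ.Path) (X : Set Λ.Path) : Prop :=
  ∀ lam : Λ.Path, Λ.rng lam = v → ∃ τ ∈ X, Λ.lmin lam τ ≠ ∅

/-- `Λ` is row finite: finitely many edges of each colour into each vertex. -/
def RowFinite (Λ : KGraph k) : Prop :=
  ∀ v : Λ.Path, Λ.deg v = 0 → ∀ i : Fin k,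
    {e : Λ.Path | Λ.deg e = Pi.single i 1 ∧ Λ.rng e = v}.Finite

/-- `Λ` has no sources: every vertex receives an edge of each colour. -/
def NoSources (Λ : KGraph k) : Prop :=
  ∀ v : Λ.Path, Λ.deg v = 0 → ∀ i : Fin k,
    {e : Λ.Path | Λ.deg e = Pi.single i 1 ∧ Λ.rng e = v}.Nonempty

end KGraph

/-- A self-similar `k`-graph `(G,Λ,φ)`. -/
structure SelfSimilar (k : ℕ) (G : Type) [Group G] (Λ : KGraph k) where
  act : G → Λ.Path → Λ.Path
  φ : G → Λ.Path → G
  act_one : ∀ μ, act 1 μ = μ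
  act_mul : ∀ g h μ, act (g * h) μ = act g (act h μ)
  deg_act : ∀ g μ, Λ.deg (act g μ) = Λ.deg μ
  src_act : ∀ g μ, Λ.src (act g μ) = act g (Λ.src μ)
  rng_act : ∀ g μ, Λ.rng (act g μ) = act g (Λ.rng μ)
  φ_mul : ∀ g h μ, φ (g * h) μ = φ g (act h μ) * φ h μ
  act_comp : ∀ g μ ν (h : Λ.src μ = Λ.rng ν)
      (h' : Λ.src (act g μ) = Λ.rng (act (φ g μ) ν)),
      act g (Λ.comp μ ν h) = Λ.comp (act g μ) (act (φ g μ) ν) h'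
  φ_comp : ∀ g μ ν (h : Λ.src μ = Λ.rng ν),
      φ g (Λ.comp μ ν h) = φ (φ g μ) ν
  φ_vtx : ∀ g v, Λ.deg v = 0 → φ g v = g

variable {k : ℕ} {G : Type} [Group G] {Λ : KGraph k}

/-- Orthogonality of two triples: `Λ^min(μ,ξ) = Λ^min(ν,η) = ∅`. -/
def Orth (Λ : KGraph k) (t u : Λ.Path × G × Λ.Path) : Prop :=
  Λ.lmin t.1 u.1 = ∅ ∧ Λ.lmin t.2.2 u.2.2 = ∅

/-- Membership in `S_{G,Λ}`: a finite set of pairwise orthogonal triples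
`(μ,g,ν)` with `s(μ) = g⬝s(ν)`. -/
def IsElem (SS : SelfSimilar k G Λ) (F : Set (Λ.Path × G × Λ.Path)) : Prop :=
  F.Finite ∧ (∀ t ∈ F, Λ.src t.1 = SS.act t.2.1 (Λ.src t.2.2)) ∧
    ∀ t ∈ F, ∀ u ∈ F, t ≠ u → Orth Λ t u

/-- The multiplication of `S_{G,Λ}`. -/
def smul (SS : SelfSimilar k G Λ) (E F : Set (Λ.Path × G × Λ.Path)) :
    Set (Λ.Path × G × Λ.Path) :=
  {t | ∃ μ g ν ξ h η α β, (μ, g, ν) ∈ E ∧ (ξ, h, η) ∈ F ∧ (α, β) ∈ Λ.lmin ν ξ ∧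
    ∃ (h1 : Λ.src μ = Λ.rng (SS.act g α)) (h2 : Λ.src η = Λ.rng (SS.act h⁻¹ β)),
      t = (Λ.comp μ (SS.act g α) h1,
           SS.φ g α * SS.φ h (SS.act h⁻¹ β),
           Λ.comp η (SS.act h⁻¹ β) h2)}

/-- The involution `F* = {(ν,g⁻¹,μ) : (μ,g,ν) ∈ F}`. -/
def sstar (F : Set (Λ.Path × G × Λ.Path)) : Set (Λ.Path × G × Λ.Path) :=
  {t | (t.2.2, t.2.1⁻¹, t.1) ∈ F}

/-- The singleton idempotent `ι_μ = {(μ,e_G,μ)}`. -/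
def iota (Λ : KGraph k) (G : Type) [Group G] (μ : Λ.Path) :
    Set (Λ.Path × G × Λ.Path) := {(μ, (1 : G), μ)}

/-- Idempotents of `S_{G,Λ}`. -/
def IsIdem (SS : SelfSimilar k G Λ) (E : Set (Λ.Path × G × Λ.Path)) : Prop :=
  IsElem SS E ∧ smul SS E E = E

/-- The natural partial order of the inverse semigroup `S_{G,Λ}`:
`s ≤ t` iff `s = te` for some idempotent `e`. -/
def leS (SS : SelfSimilar k G Λ) (s t : Set (Λ.Path × G × Λ.Path)) : Prop :=
  ∃ E, IsIdem SS E ∧ smul SS t E = s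

/-- `τ` is strongly fixed by `g`. -/
def StronglyFixed (SS : SelfSimilar k G Λ) (g : G) (τ : Λ.Path) : Prop :=
  SS.act g τ = τ ∧ SS.φ g τ = 1

/-- The set `SF_g` of paths strongly fixed by `g`. -/
def SFg (SS : SelfSimilar k G Λ) (g : G) : Set Λ.Path :=
  {τ | SS.act g τ = τ ∧ SS.φ g τ = 1}

/-- `SF_g` is locally exhausted. -/
def LocallyExhausted (SS : SelfSimilar k G Λ) (g : G) : Prop :=
  ∀ v : Λ.Path, Λ.deg v = 0 →
    ∃ M : Set Λ.Path, M.Finite ∧ (∀ τ ∈ M, τ ∈ SFg SS g ∧ Λ.rng τ = v) ∧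
      ∀ τ ∈ SFg SS g, Λ.rng τ = v → ∃ τ' ∈ M, Λ.lmin τ τ' ≠ ∅

/-- The principal ideal `J_F` admits a finite cover. -/
def HasFiniteCover (SS : SelfSimilar k G Λ) (F : Set (Λ.Path × G × Λ.Path)) : Prop :=
  ∃ C : Set (Set (Λ.Path × G × Λ.Path)), C.Finite ∧
    (∀ E ∈ C, IsIdem SS E ∧ smul SS F E = E) ∧
    ∀ E, IsIdem SS E → smul SS F E = E → E ≠ ∅ → ∃ E' ∈ C, smul SS E E' ≠ ∅

/-- A (proper, nonzero) filter in the idempotent semilattice `E(S_{G,Λ})`. -/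
def IsFilterE (SS : SelfSimilar k G Λ) (𝓕 : Set (Set (Λ.Path × G × Λ.Path))) : Prop :=
  𝓕.Nonempty ∧ (∀ E ∈ 𝓕, IsIdem SS E) ∧ (∅ ∉ 𝓕) ∧
    (∀ E ∈ 𝓕, ∀ F ∈ 𝓕, smul SS E F ∈ 𝓕) ∧
    ∀ E ∈ 𝓕, ∀ F, IsIdem SS F → smul SS F E = E → F ∈ 𝓕

/-- An ultrafilter: a maximal filter in `E(S_{G,Λ})`. -/
def IsUltrafilterE (SS : SelfSimilar k G Λ) (𝓕 : Set (Set (Λ.Path × G × Λ.Path))) : Prop :=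
  IsFilterE SS 𝓕 ∧ ∀ 𝓖, IsFilterE SS 𝓖 → 𝓕 ⊆ 𝓖 → 𝓖 = 𝓕

/-- `n ≤ m` for `m ∈ (ℕ ∪ {∞})^k` and `n ∈ ℕ^k`. -/
def LeDeg {k : ℕ} (m : Fin k → ℕ∞) (n : Fin k → ℕ) : Prop :=
  ∀ i, (n i : ℕ∞) ≤ m i

/-- A boundary path `x` of a finitely aligned `k`-graph, recorded via its
degree `d(x) ∈ (ℕ∪{∞})^k` and its initial segments `x(0,n)` for `n ≤ d(x)`. -/
structure BoundaryPath (Λ : KGraph k) where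
  bdeg : Fin k → ℕ∞
  seg : (Fin k → ℕ) → Λ.Path
  deg_seg : ∀ n, LeDeg bdeg n → Λ.deg (seg n) = n
  rng_seg : ∀ n, LeDeg bdeg n → Λ.rng (seg n) = seg 0
  seg_comp : ∀ m n : Fin k → ℕ, LeDeg bdeg (m + n) →
    ∃ (τ : Λ.Path) (h : Λ.src (seg m) = Λ.rng τ),
      Λ.deg τ = n ∧ seg (m + n) = Λ.comp (seg m) τ h
  seg_junk : ∀ n, ¬ LeDeg bdeg n → seg n = seg 0
  boundary : ∀ n, LeDeg bdeg n → ∀ X : Set Λ.Path, X.Finite →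
    (∀ τ ∈ X, Λ.rng τ = Λ.src (seg n) ∧ τ ≠ Λ.src (seg n)) →
    KGraph.Exhaustive Λ (Λ.src (seg n)) X →
    ∃ τ ∈ X, ∃ (_ : LeDeg bdeg (n + Λ.deg τ)) (h : Λ.src (seg n) = Λ.rng τ),
      seg (n + Λ.deg τ) = Λ.comp (seg n) τ h

/-- `z = σ^n(x)`, the shift of the boundary path `x` by `n`. -/
def IsShift (Λ : KGraph k) (x : BoundaryPath Λ) (n : Fin k → ℕ)
    (z : BoundaryPath Λ) : Prop :=
  (∀ i, z.bdeg i = x.bdeg i - (n i : ℕ∞)) ∧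
    ∀ p, LeDeg z.bdeg p → ∃ h : Λ.src (x.seg n) = Λ.rng (z.seg p),
      x.seg (n + p) = Λ.comp (x.seg n) (z.seg p) h

/-- `z = g⬝x` for boundary paths. -/
def IsActB (SS : SelfSimilar k G Λ) (g : G) (x z : BoundaryPath Λ) : Prop :=
  z.bdeg = x.bdeg ∧ ∀ p, LeDeg x.bdeg p → z.seg p = SS.act g (x.seg p)

/-- `y = lam⬝z`, the concatenation of a finite path with a boundary path. -/
def IsCompB (Λ : KGraph k) (lam : Λ.Path) (z y : BoundaryPath Λ) : Prop :=
  (∀ i, y.bdeg i = (Λ.deg lam i : ℕ∞) + z.bdeg i) ∧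
    ∀ p, LeDeg z.bdeg p → ∃ h : Λ.src lam = Λ.rng (z.seg p),
      y.seg (Λ.deg lam + p) = Λ.comp lam (z.seg p) h

/-- `x ∈ Z(lam)`, i.e. `x(0,d(lam)) = lam`. -/
def InZ (Λ : KGraph k) (x : BoundaryPath Λ) (lam : Λ.Path) : Prop :=
  LeDeg x.bdeg (Λ.deg lam) ∧ x.seg (Λ.deg lam) = lam

/-- `y` is a fixed point for `θ_{{(μ,g,ν)}}`: `y ∈ Z(ν)` and `μ(g⬝σ^{d(ν)}(y)) = y`. -/
def FixedPt (SS : SelfSimilar k G Λ) (μ : Λ.Path) (g : G) (ν : Λ.Path)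
    (y : BoundaryPath Λ) : Prop :=
  InZ Λ y ν ∧ ∃ z w, IsShift Λ y (Λ.deg ν) z ∧ IsActB SS g z w ∧ IsCompB Λ μ w y

/-- `y` is an interior fixed point for `θ_{{(μ,g,ν)}}`: some cylinder containing
`y` consists entirely of fixed points. -/
def InteriorFixedPt (SS : SelfSimilar k G Λ) (μ : Λ.Path) (g : G) (ν : Λ.Path)
    (y : BoundaryPath Λ) : Prop :=
  ∃ η : Λ.Path, InZ Λ y η ∧ ∀ y', InZ Λ y' η → FixedPt SS μ g ν y'

/-- `G`-aperiodic condition (A). -/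
def CondA (SS : SelfSimilar k G Λ) : Prop :=
  ∀ v : Λ.Path, Λ.deg v = 0 → ∃ x : BoundaryPath Λ, x.seg 0 = v ∧
    ∀ (m n : Fin k → ℕ), LeDeg x.bdeg m → LeDeg x.bdeg n →
      ∀ (g : G) (z w : BoundaryPath Λ),
        IsShift Λ x m z → IsShift Λ x n w → IsActB SS g w z → m = n

/-- `(G,Λ)` is `G`-cofinal. -/
def GCofinal (SS : SelfSimilar k G Λ) : Prop :=
  ∀ v : Λ.Path, Λ.deg v = 0 → ∀ x : BoundaryPath Λ,
    ∃ n : Fin k → ℕ, LeDeg x.bdeg n ∧ ∃ (g : G) (p : Λ.Path),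
      Λ.rng p = v ∧ Λ.src p = SS.act g (Λ.src (x.seg n))

/-- The ultrafilter `F_x` associated to a boundary path `x`. -/
def Fx (SS : SelfSimilar k G Λ) (x : BoundaryPath Λ) :
    Set (Set (Λ.Path × G × Λ.Path)) :=
  {E | IsIdem SS E ∧ ∃ n : Fin k → ℕ, LeDeg x.bdeg n ∧
    (x.seg n, (1 : G), x.seg n) ∈ E}

/-!
If `F` is idempotent, each triple `t ∈ F` is a product of two triples of `F`; the range of `t`
extends the range of the left factor and its source extends the source of the right one, so
orthogonality forces both factors to be `t` itself. The extensions then have degree `0`, which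
gives `t = (μ, g, μ)` with `g = g * g`, i.e. `g = 1`. Conversely, in a set of diagonal triples with
pairwise empty `Λ^min`, the only nonzero products are `(μ,1,μ)(μ,1,μ)`, and
`Λ^min(μ,μ) = {(s(μ), s(μ))}` makes that product `(μ,1,μ)`.
-/

namespace KGraph

theorem deg_eq_zero_of_comp_eq_self {μ γ : Λ.Path} {h : Λ.src μ = Λ.rng γ}
    (e : Λ.comp μ γ h = μ) : Λ.deg γ = 0 := by
  simpa [Λ.deg_comp] using congrArg Λ.deg e

theorem comp_eq_self_iff {μ γ : Λ.Path} (h : Λ.src μ = Λ.rng γ) :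
    Λ.comp μ γ h = μ ↔ γ = Λ.src μ := by
  constructor
  · intro e
    rw [h, Λ.rng_vtx γ (deg_eq_zero_of_comp_eq_self e)]
  · rintro rfl
    exact Λ.comp_src_id μ h

theorem comp_eq_self_of_deg_eq_zero {μ γ : Λ.Path} (h : Λ.src μ = Λ.rng γ)
    (hγ : Λ.deg γ = 0) : Λ.comp μ γ h = μ :=
  (comp_eq_self_iff h).mpr (by rw [h, Λ.rng_vtx γ hγ])

theorem mem_lmin_self_iff {μ : Λ.Path} {p : Λ.Path × Λ.Path} :
    p ∈ Λ.lmin μ μ ↔ p = (Λ.src μ, Λ.src μ) := by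
  constructor
  · rintro ⟨h1, h2, hcomp, hdeg⟩
    have hμ : Λ.comp μ p.1 h1 = μ := comp_eq_self_of_deg_eq_zero h1 (by simpa using hdeg)
    exact Prod.ext ((comp_eq_self_iff h1).mp hμ) ((comp_eq_self_iff h2).mp (hcomp ▸ hμ))
  · rintro rfl
    have hv : Λ.src μ = Λ.rng (Λ.src μ) := (Λ.rng_vtx _ (Λ.deg_src μ)).symm
    exact ⟨hv, hv, rfl, by simp [Λ.deg_src]⟩

theorem lmin_comp_left_nonempty (μ γ : Λ.Path) (h : Λ.src μ = Λ.rng γ) :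
    (Λ.lmin (Λ.comp μ γ h) μ).Nonempty := by
  have hv : Λ.src (Λ.comp μ γ h) = Λ.rng (Λ.src (Λ.comp μ γ h)) :=
    (Λ.rng_vtx _ (Λ.deg_src _)).symm
  refine ⟨(Λ.src (Λ.comp μ γ h), γ), hv, h, Λ.comp_src_id _ _, ?_⟩
  simp [Λ.deg_src, Λ.deg_comp]

theorem eq_of_mem_lmin_of_deg_eq_zero {μ ν α β : Λ.Path} (hp : (α, β) ∈ Λ.lmin μ ν)
    (hα : Λ.deg α = 0) (hβ : Λ.deg β = 0) : μ = ν := by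
  obtain ⟨h1, h2, hcomp, -⟩ := hp
  rw [← comp_eq_self_of_deg_eq_zero h1 hα, hcomp, comp_eq_self_of_deg_eq_zero h2 hβ]

end KGraph

namespace SelfSimilar

theorem φ_one_left (SS : SelfSimilar k G Λ) (μ : Λ.Path) : SS.φ 1 μ = 1 := by
  simpa [SS.act_one] using SS.φ_mul 1 1 μ

end SelfSimilar

theorem diag_eq_smul_triple (SS : SelfSimilar k G Λ) (μ : Λ.Path)
    (h1 : Λ.src μ = Λ.rng (SS.act 1 (Λ.src μ)))
    (h2 : Λ.src μ = Λ.rng (SS.act (1 : G)⁻¹ (Λ.src μ))) :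
    ((μ, 1, μ) : Λ.Path × G × Λ.Path) =
      (Λ.comp μ (SS.act 1 (Λ.src μ)) h1,
        SS.φ 1 (Λ.src μ) * SS.φ 1 (SS.act 1⁻¹ (Λ.src μ)),
        Λ.comp μ (SS.act 1⁻¹ (Λ.src μ)) h2) := by
  rw [(Λ.comp_eq_self_iff h1).mpr (SS.act_one _),
    (Λ.comp_eq_self_iff h2).mpr (by rw [inv_one, SS.act_one]), SS.φ_one_left, SS.φ_one_left,
    mul_one]

section Idempotents

variable {SS : SelfSimilar k G Λ} {F : Set (Λ.Path × G × Λ.Path)}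

theorem IsElem.eq_of_lmin_fst_nonempty (hF : IsElem SS F) {t u : Λ.Path × G × Λ.Path}
    (ht : t ∈ F) (hu : u ∈ F) (hne : (Λ.lmin t.1 u.1).Nonempty) : t = u :=
  by_contra fun h => hne.ne_empty (hF.2.2 t ht u hu h).1

theorem IsElem.eq_of_lmin_snd_nonempty (hF : IsElem SS F) {t u : Λ.Path × G × Λ.Path}
    (ht : t ∈ F) (hu : u ∈ F) (hne : (Λ.lmin t.2.2 u.2.2).Nonempty) : t = u :=
  by_contra fun h => hne.ne_empty (hF.2.2 t ht u hu h).2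

theorem IsElem.eq_diag_of_mem_smul_self (hF : IsElem SS F) {t : Λ.Path × G × Λ.Path}
    (ht : t ∈ F) (hts : t ∈ smul SS F F) : ∃ μ, t = (μ, 1, μ) := by
  obtain ⟨μ, g, ν, ξ, h, η, α, β, hμ, hξ, hαβ, h1, h2, rfl⟩ := hts
  have hleft := hF.eq_of_lmin_fst_nonempty ht hμ (Λ.lmin_comp_left_nonempty μ _ h1)
  have hright := hF.eq_of_lmin_snd_nonempty ht hξ (Λ.lmin_comp_left_nonempty η _ h2)
  simp only [Prod.mk.injEq] at hleft hright
  obtain ⟨hμμ, hg, hην⟩ := hleft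
  obtain ⟨hμξ, hh, hηη⟩ := hright
  have hα : Λ.deg α = 0 := SS.deg_act g α ▸ KGraph.deg_eq_zero_of_comp_eq_self hμμ
  have hβ : Λ.deg β = 0 := SS.deg_act h⁻¹ β ▸ KGraph.deg_eq_zero_of_comp_eq_self hηη
  have hνξ : ν = ξ := KGraph.eq_of_mem_lmin_of_deg_eq_zero hαβ hα hβ
  have hφ : SS.φ g α * SS.φ h (SS.act h⁻¹ β) = g * h := by
    rw [SS.φ_vtx g α hα, SS.φ_vtx h _ ((SS.deg_act _ _).trans hβ)]
  have h_one : h = 1 := mul_eq_left.mp (hφ.symm.trans hg)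
  have hημ : η = μ := hηη.symm.trans (hην.trans (hνξ.trans (hμξ.symm.trans hμμ)))
  exact ⟨μ, by rw [hμμ, hηη, hh, h_one, hημ]⟩

theorem diag_mem_smul {E F : Set (Λ.Path × G × Λ.Path)} {μ : Λ.Path}
    (hE : (μ, 1, μ) ∈ E) (hF : (μ, 1, μ) ∈ F) : (μ, 1, μ) ∈ smul SS E F := by
  have hv : Λ.rng (Λ.src μ) = Λ.src μ := Λ.rng_vtx _ (Λ.deg_src μ)
  have h1 : Λ.src μ = Λ.rng (SS.act 1 (Λ.src μ)) := by rw [SS.act_one, hv]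
  have h2 : Λ.src μ = Λ.rng (SS.act (1 : G)⁻¹ (Λ.src μ)) := by rw [inv_one, SS.act_one, hv]
  exact ⟨μ, 1, μ, μ, 1, μ, _, _, hE, hF, Λ.mem_lmin_self_iff.mpr rfl, h1, h2,
    diag_eq_smul_triple SS μ h1 h2⟩

theorem smul_self_subset_of_diag (hdiag : ∀ t ∈ F, ∃ μ : Λ.Path, t = (μ, (1 : G), μ))
    (hdisj : ∀ t ∈ F, ∀ u ∈ F, t ≠ u → Λ.lmin t.1 u.1 = ∅) : smul SS F F ⊆ F := by
  rintro t ⟨μ, g, ν, ξ, h, η, α, β, hleft, hright, hαβ, h1, h2, rfl⟩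
  obtain ⟨μ', hμ'⟩ := hdiag _ hleft
  obtain ⟨η', hη'⟩ := hdiag _ hright
  simp only [Prod.mk.injEq] at hμ' hη'
  obtain ⟨rfl, rfl, rfl⟩ := hμ'
  obtain ⟨rfl, rfl, rfl⟩ := hη'
  obtain rfl : ν = η := by
    by_contra hne
    exact (hdisj _ hleft _ hright (by simp [hne])).subset hαβ
  obtain ⟨rfl, rfl⟩ := Prod.mk.inj (Λ.mem_lmin_self_iff.mp hαβ)
  rwa [← diag_eq_smul_triple]

theorem isElem_of_diag (hfin : F.Finite) (hdiag : ∀ t ∈ F, ∃ μ : Λ.Path, t = (μ, (1 : G), μ))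
    (hdisj : ∀ t ∈ F, ∀ u ∈ F, t ≠ u → Λ.lmin t.1 u.1 = ∅) : IsElem SS F := by
  refine ⟨hfin, fun t ht => ?_, fun t ht u hu hne => ?_⟩
  · obtain ⟨μ, rfl⟩ := hdiag t ht
    exact (SS.act_one _).symm
  · obtain ⟨μ, rfl⟩ := hdiag t ht
    obtain ⟨ν, rfl⟩ := hdiag u hu
    exact ⟨hdisj _ ht _ hu hne, hdisj _ ht _ hu hne⟩

end Idempotents

theorem stmt4_general (SS : SelfSimilar k G Λ)
    (F : Set (Λ.Path × G × Λ.Path)) :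
    IsIdem SS F ↔
      (F.Finite ∧ (∀ t ∈ F, ∃ μ : Λ.Path, t = (μ, (1 : G), μ)) ∧
        ∀ t ∈ F, ∀ u ∈ F, t ≠ u → Λ.lmin t.1 u.1 = ∅) := by
  constructor
  · rintro ⟨hF, hFF⟩
    refine ⟨hF.1, fun t ht => hF.eq_diag_of_mem_smul_self ht (by rwa [hFF]),
      fun t ht u hu hne => (hF.2.2 t ht u hu hne).1⟩
  · rintro ⟨hfin, hdiag, hdisj⟩
    refine ⟨isElem_of_diag hfin hdiag hdisj, (smul_self_subset_of_diag hdiag hdisj).antisymm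
      fun t ht => ?_⟩
    obtain ⟨μ, rfl⟩ := hdiag t ht
    exact diag_mem_smul ht ht

/-- the idempotents of `S_{G,Λ}` are exactly the finite subsets of
`{(μ,e_G,μ) : μ ∈ Λ}` whose distinct members have `Λ^min(μ,ν) = ∅`; in
particular `E(S_{G,Λ})` does not depend on `G`. -/
theorem stmt4 (SS : SelfSimilar k G Λ) (hfa : Λ.FinitelyAligned)
    (F : Set (Λ.Path × G × Λ.Path)) :
    IsIdem SS F ↔
      (F.Finite ∧ (∀ t ∈ F, ∃ μ : Λ.Path, t = (μ, (1 : G), μ)) ∧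
        ∀ t ∈ F, ∀ u ∈ F, t ≠ u → Λ.lmin t.1 u.1 = ∅) :=
  stmt4_general SS F
end

section
/- Let (G,Λ) be a self-similar k-graph, S_{G,Λ} its inverse semigroup, and E,F ∈ S_{G,Λ} with FEF = F and EFE = E. Then E = F*. Hence S_{G,Λ} is an inverse semigroup (each element has a unique generalized inverse) with zero element the empty set. -/
variable {k : ℕ} {G : Type} [Group G] {Λ : KGraph k}

section Stmt5Aux

variable (SS : SelfSimilar k G Λ)

lemma act_inv_act (g : G) (μ : Λ.Path) : SS.act g⁻¹ (SS.act g μ) = μ := by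
  rw [← SS.act_mul, inv_mul_cancel, SS.act_one]

lemma pi_add_eq_zero {m n : Fin k → ℕ} (h : m + n = 0) : m = 0 ∧ n = 0 := by
  constructor <;> funext i <;>
    (have := congrFun h i; simp only [Pi.add_apply, Pi.zero_apply] at this ⊢; omega)

lemma deg_zero_src {x τ : Λ.Path} (h : Λ.src x = Λ.rng τ) (h0 : Λ.deg τ = 0) :
    τ = Λ.src x :=
  (h.trans (Λ.rng_vtx τ h0)).symm

lemma comp_deg_zero {x τ : Λ.Path} (h : Λ.src x = Λ.rng τ) (h0 : Λ.deg τ = 0) :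
    Λ.comp x τ h = x := by
  have hτ : τ = Λ.src x := deg_zero_src h h0
  subst hτ
  exact Λ.comp_src_id x h

lemma orthoExt1 {A : Set (Λ.Path × G × Λ.Path)}
    (hA : ∀ t ∈ A, ∀ u ∈ A, t ≠ u → Orth Λ t u)
    {μ ν μ' ν' : Λ.Path} {g g' : G} {τ : Λ.Path}
    (ht : (μ, g, ν) ∈ A) (ht' : (μ', g', ν') ∈ A)
    (hτ : Λ.src μ' = Λ.rng τ) (hμ : μ = Λ.comp μ' τ hτ) :
    μ = μ' ∧ g = g' ∧ ν = ν' ∧ Λ.deg τ = 0 := by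
  have heq : ((μ, g, ν) : Λ.Path × G × Λ.Path) = (μ', g', ν') := by
    by_contra hne
    have horth : Λ.lmin μ μ' = ∅ := (hA _ ht _ ht' hne).1
    have h1' : Λ.src μ = Λ.rng (Λ.src μ) := (Λ.rng_vtx _ (Λ.deg_src μ)).symm
    have hmem : (Λ.src μ, τ) ∈ Λ.lmin μ μ' := by
      simp only [KGraph.lmin, Set.mem_setOf_eq]
      refine ⟨h1', hτ, (Λ.comp_src_id μ _).trans hμ, ?_⟩
      rw [Λ.deg_src, add_zero, hμ, Λ.deg_comp]
      exact (sup_eq_left.mpr le_self_add).symm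
    rw [horth] at hmem
    exact Set.notMem_empty _ hmem
  have e1 : μ = μ' := congrArg Prod.fst heq
  have e2 : g = g' := congrArg (fun t => t.2.1) heq
  have e3 : ν = ν' := congrArg (fun t => t.2.2) heq
  refine ⟨e1, e2, e3, ?_⟩
  have hd : Λ.deg μ = Λ.deg μ' + Λ.deg τ := by rw [hμ, Λ.deg_comp]
  rw [e1] at hd
  funext i
  have := congrFun hd i
  simp only [Pi.add_apply, Pi.zero_apply] at this ⊢
  omega

lemma orthoExt2 {A : Set (Λ.Path × G × Λ.Path)}
    (hA : ∀ t ∈ A, ∀ u ∈ A, t ≠ u → Orth Λ t u)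
    {μ ν μ' ν' : Λ.Path} {g g' : G} {τ : Λ.Path}
    (ht : (μ, g, ν) ∈ A) (ht' : (μ', g', ν') ∈ A)
    (hτ : Λ.src ν' = Λ.rng τ) (hν : ν = Λ.comp ν' τ hτ) :
    μ = μ' ∧ g = g' ∧ ν = ν' ∧ Λ.deg τ = 0 := by
  have heq : ((μ, g, ν) : Λ.Path × G × Λ.Path) = (μ', g', ν') := by
    by_contra hne
    have horth : Λ.lmin ν ν' = ∅ := (hA _ ht _ ht' hne).2
    have h1' : Λ.src ν = Λ.rng (Λ.src ν) := (Λ.rng_vtx _ (Λ.deg_src ν)).symm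
    have hmem : (Λ.src ν, τ) ∈ Λ.lmin ν ν' := by
      simp only [KGraph.lmin, Set.mem_setOf_eq]
      refine ⟨h1', hτ, (Λ.comp_src_id ν _).trans hν, ?_⟩
      rw [Λ.deg_src, add_zero, hν, Λ.deg_comp]
      exact (sup_eq_left.mpr le_self_add).symm
    rw [horth] at hmem
    exact Set.notMem_empty _ hmem
  have e1 : μ = μ' := congrArg Prod.fst heq
  have e2 : g = g' := congrArg (fun t => t.2.1) heq
  have e3 : ν = ν' := congrArg (fun t => t.2.2) heq
  refine ⟨e1, e2, e3, ?_⟩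
  have hd : Λ.deg ν = Λ.deg ν' + Λ.deg τ := by rw [hν, Λ.deg_comp]
  rw [e3] at hd
  funext i
  have := congrFun hd i
  simp only [Pi.add_apply, Pi.zero_apply] at this ⊢
  omega

/-- Key structural lemma: if `A(BA) = A` (with the given association) then every
triple of `A` is a restriction of the reverse of a triple of `B`. -/
lemma genInvStep {A B : Set (Λ.Path × G × Λ.Path)} (hA : IsElem SS A)
    (hAB : smul SS (smul SS A B) A = A) {μ : Λ.Path} {g : G} {ν : Λ.Path}
    (ht : (μ, g, ν) ∈ A) :
    ∃ ξ h η β, ((ξ, h, η) : Λ.Path × G × Λ.Path) ∈ B ∧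
      ∃ (hb : Λ.src ξ = Λ.rng β) (hb' : Λ.src η = Λ.rng (SS.act h⁻¹ β)),
        ν = Λ.comp ξ β hb ∧ μ = Λ.comp η (SS.act h⁻¹ β) hb' ∧
        SS.φ h (SS.act h⁻¹ β) = g⁻¹ := by
  have ht' := ht
  rw [← hAB] at ht'
  obtain ⟨a, p, b, ξ', h', η', α, β, hab, hA', hαβ, H1, H2, hteq⟩ := ht'
  obtain ⟨μ₁, g₁, ν₁, ξ, h, η, α₀, β₀, hA₁, hB₁, hαβ₀, H3, H4, habeq⟩ := hab
  simp only [Prod.mk.injEq] at habeq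
  obtain ⟨ha, hp, hbb⟩ := habeq
  subst ha; subst hp; subst hbb
  simp only [Prod.mk.injEq] at hteq
  obtain ⟨hμ, hg, hν⟩ := hteq
  -- step (i): μ extends μ₁, both triples in A
  have h3 : Λ.src (SS.act g₁ α₀) =
      Λ.rng (SS.act (SS.φ g₁ α₀ * SS.φ h (SS.act h⁻¹ β₀)) α) := by
    rw [← Λ.src_comp μ₁ (SS.act g₁ α₀) H3]; exact H1
  have h4 : Λ.src μ₁ = Λ.rng (Λ.comp (SS.act g₁ α₀)
      (SS.act (SS.φ g₁ α₀ * SS.φ h (SS.act h⁻¹ β₀)) α) h3) := by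
    rw [Λ.rng_comp]; exact H3
  have hμ' : μ = Λ.comp μ₁ (Λ.comp (SS.act g₁ α₀)
      (SS.act (SS.φ g₁ α₀ * SS.φ h (SS.act h⁻¹ β₀)) α) h3) h4 :=
    hμ.trans (Λ.comp_assoc _ _ _ H3 H1 h3 h4)
  obtain ⟨e1, e2, e3, e4⟩ := orthoExt1 hA.2.2 ht hA₁ h4 hμ'
  rw [Λ.deg_comp, SS.deg_act, SS.deg_act] at e4
  obtain ⟨hα₀, hα⟩ := pi_add_eq_zero e4
  -- step (ii): ν extends η', both triples in A
  obtain ⟨f1, f2, f3, f4⟩ := orthoExt2 hA.2.2 ht hA' H2 hν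
  rw [SS.deg_act] at f4
  subst e1; subst e2; subst e3; subst f1; subst f2; subst f3
  -- step (iii): from (α,β) ∈ lmin b μ with deg α = deg β = 0 get b = μ
  obtain ⟨hb1, hb2, hcomp, _⟩ := hαβ
  dsimp only at hb1 hb2 hcomp
  have hμη : μ = Λ.comp η (SS.act h⁻¹ β₀) H4 :=
    (comp_deg_zero hb2 f4).symm.trans (hcomp.symm.trans (comp_deg_zero hb1 hα))
  -- step (iv): from (α₀,β₀) ∈ lmin ν ξ with deg α₀ = 0 get ν = ξ β₀
  obtain ⟨hc1, hc2, hcomp₀, _⟩ := hαβ₀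
  dsimp only at hc1 hc2 hcomp₀
  have hνξ : ν = Λ.comp ξ β₀ hc2 :=
    (comp_deg_zero hc1 hα₀).symm.trans hcomp₀
  -- step (v): the group element
  have hβ : β = Λ.src μ := deg_zero_src hb2 f4
  have hsrc : Λ.src μ = SS.act g (Λ.src ν) := hA.2.1 _ ht
  have hact : SS.act g⁻¹ β = Λ.src ν := by rw [hβ, hsrc, act_inv_act]
  rw [SS.φ_vtx _ α hα, hact, SS.φ_vtx g _ (Λ.deg_src ν),
    deg_zero_src hc1 hα₀, SS.φ_vtx g _ (Λ.deg_src ν)] at hg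
  -- hg : g = (g * φ h (act h⁻¹ β₀)) * g
  have h5 : (g * SS.φ h (SS.act h⁻¹ β₀)) * g = 1 * g := by
    rw [one_mul]; exact hg.symm
  have h6 : g * SS.φ h (SS.act h⁻¹ β₀) = 1 := mul_right_cancel h5
  exact ⟨ξ, h, η, β₀, hB₁, hc2, H4, hνξ, hμη,
    eq_inv_of_mul_eq_one_right h6⟩

end Stmt5Aux

/-- uniqueness of generalized inverses in `S_{G,Λ}`: if
`FEF = F` and `EFE = E` then `E = F*`. -/
theorem stmt5 (SS : SelfSimilar k G Λ) (hfa : Λ.FinitelyAligned)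
    (E F : Set (Λ.Path × G × Λ.Path)) (hE : IsElem SS E) (hF : IsElem SS F)
    (h1 : smul SS (smul SS F E) F = F)
    (h2 : smul SS (smul SS E F) E = E) :
    E = sstar F := by
  apply Set.Subset.antisymm
  · -- E ⊆ F*
    intro t ht0
    obtain ⟨μ, g, ν⟩ := t
    obtain ⟨ξ, h, η, β₀, hF₁, hb, hb', hν, hμ, hφ⟩ := genInvStep SS hE h2 ht0
    obtain ⟨μ₂, g₂, ν₂, γ, hE₂, hc, hc', hη, hξ, hφ₂⟩ := genInvStep SS hF h1 hF₁
    subst hη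
    have h3 : Λ.src γ = Λ.rng (SS.act h⁻¹ β₀) := by
      rw [← Λ.src_comp μ₂ γ hc]; exact hb'
    have h4 : Λ.src μ₂ = Λ.rng (Λ.comp γ (SS.act h⁻¹ β₀) h3) := by
      rw [Λ.rng_comp]; exact hc
    have hμ' : μ = Λ.comp μ₂ (Λ.comp γ (SS.act h⁻¹ β₀) h3) h4 :=
      hμ.trans (Λ.comp_assoc _ _ _ hc hb' h3 h4)
    obtain ⟨e1, e2, e3, e4⟩ := orthoExt1 hE.2.2 ht0 hE₂ h4 hμ'
    rw [Λ.deg_comp] at e4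
    obtain ⟨hγ0, _⟩ := pi_add_eq_zero e4
    subst e1; subst e2; subst e3
    have hγ : γ = Λ.src μ := deg_zero_src hc hγ0
    have hsrc : Λ.src μ = SS.act g (Λ.src ν) := hE.2.1 _ ht0
    have hgγ : SS.act g⁻¹ γ = Λ.src ν := by rw [hγ, hsrc, act_inv_act]
    have hξν : ξ = ν :=
      hξ.trans (comp_deg_zero hc' (by rw [SS.deg_act]; exact hγ0))
    rw [hgγ, SS.φ_vtx g _ (Λ.deg_src ν)] at hφ₂
    have hhg : h = g⁻¹ := by rw [hφ₂, inv_inv]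
    have hημ : Λ.comp μ γ hc = μ := comp_deg_zero hc hγ0
    rw [hξν, hhg, hημ] at hF₁
    exact hF₁
  · -- F* ⊆ E
    intro t ht0
    obtain ⟨a, p, c⟩ := t
    have htF : ((c, p⁻¹, a) : Λ.Path × G × Λ.Path) ∈ F := ht0
    obtain ⟨μ, g, ν, γ, hE₁, hc, hc', ha, hcc, hφ⟩ := genInvStep SS hF h1 htF
    obtain ⟨ξ₂, h₂, η₂, β₀, hF₂, hd, hd', hν, hμ, hφ₂⟩ := genInvStep SS hE h2 hE₁
    subst hν
    have h3 : Λ.src β₀ = Λ.rng (SS.act g⁻¹ γ) := by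
      rw [← Λ.src_comp ξ₂ β₀ hd]; exact hc'
    have h4 : Λ.src ξ₂ = Λ.rng (Λ.comp β₀ (SS.act g⁻¹ γ) h3) := by
      rw [Λ.rng_comp]; exact hd
    have hc'' : c = Λ.comp ξ₂ (Λ.comp β₀ (SS.act g⁻¹ γ) h3) h4 :=
      hcc.trans (Λ.comp_assoc _ _ _ hd hc' h3 h4)
    obtain ⟨_, _, _, e4⟩ := orthoExt1 hF.2.2 htF hF₂ h4 hc''
    rw [Λ.deg_comp, SS.deg_act] at e4
    obtain ⟨_, hγ0⟩ := pi_add_eq_zero e4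
    have hγ : γ = Λ.src μ := deg_zero_src hc hγ0
    have hsrc : Λ.src μ = SS.act g (Λ.src (Λ.comp ξ₂ β₀ hd)) := hE.2.1 _ hE₁
    have hgγ : SS.act g⁻¹ γ = Λ.src (Λ.comp ξ₂ β₀ hd) := by
      rw [hγ, hsrc, act_inv_act]
    have ha' : a = μ := ha.trans (comp_deg_zero hc hγ0)
    have hc''' : c = Λ.comp ξ₂ β₀ hd :=
      hcc.trans (comp_deg_zero hc' (by rw [SS.deg_act]; exact hγ0))
    rw [hgγ, SS.φ_vtx g _ (Λ.deg_src _), inv_inv] at hφ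
    rw [ha', hc''', ← hφ]
    exact hE₁
end

section
/- Let (G,Λ) be a self-similar k-graph and consider singletons ι_μ = {(μ,e_G,μ)} and s = {(ξ,g,η)} in S_{G,Λ}. Then ι_μ ≤ s in the natural partial order of the inverse semigroup S_{G,Λ} if and only if: (1) η = ξ; (2) μ = ξβ for some path β with r(β) = s(ξ); and (3) β is strongly fixed by g, i.e. g·β = β and φ(g,β) = e_G. -/
variable {k : ℕ} {G : Type} [Group G] {Λ : KGraph k}

/-- Composing with a vertex on the right does nothing. -/
lemma comp_vtx (Λ : KGraph k) (μ τ : Λ.Path) (h : Λ.src μ = Λ.rng τ)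
    (hd : Λ.deg τ = 0) : Λ.comp μ τ h = μ := by
  have hτ : τ = Λ.src μ := by rw [h, Λ.rng_vtx τ hd]
  subst hτ
  exact Λ.comp_src_id μ h

lemma comp_congr (Λ : KGraph k) {μ τ τ' : Λ.Path} (h : τ = τ')
    (h1 : Λ.src μ = Λ.rng τ) (h2 : Λ.src μ = Λ.rng τ') :
    Λ.comp μ τ h1 = Λ.comp μ τ' h2 := by subst h; rfl

lemma phi_one (SS : SelfSimilar k G Λ) (τ : Λ.Path) : SS.φ 1 τ = 1 := by
  have h := SS.φ_mul 1 1 τ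
  rw [one_mul, SS.act_one] at h
  exact left_eq_mul.mp h

/-- If `a = cτ` then `Λ^min(a,c) ≠ ∅`. -/
lemma lmin_ext_ne (Λ : KGraph k) (c τ : Λ.Path) (h : Λ.src c = Λ.rng τ) :
    Λ.lmin (Λ.comp c τ h) c ≠ ∅ := by
  intro he
  have hm : (Λ.src (Λ.comp c τ h), τ) ∈ Λ.lmin (Λ.comp c τ h) c := by
    refine ⟨(Λ.rng_vtx _ (Λ.deg_src _)).symm, h, Λ.comp_src_id _ _, ?_⟩
    rw [Λ.deg_src, add_zero]
    exact (sup_eq_left.mpr (by rw [Λ.deg_comp]; exact self_le_add_right _ _)).symm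
  rw [he] at hm
  exact hm

/-- Every element of an idempotent of `S_{G,Λ}` has the form `(a,1,a)`. -/
lemma idem_shape (SS : SelfSimilar k G Λ) {E : Set (Λ.Path × G × Λ.Path)}
    (hE : IsIdem SS E) : ∀ t ∈ E, t.2.2 = t.1 ∧ t.2.1 = 1 := by
  rintro ⟨a, c, b⟩ ht
  have ht' : ((a, c, b) : Λ.Path × G × Λ.Path) ∈ smul SS E E := by
    rw [hE.2]; exact ht
  obtain ⟨μ, g, ν, ξ, h, η, α, β, hμ, hξ, hαβ, h1, h2, hteq⟩ := ht'
  -- identify the two factors with `(a,c,b)` itself via orthogonality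
  have e1 : ((a, c, b) : Λ.Path × G × Λ.Path) = (μ, g, ν) := by
    by_contra hne
    have horth := (hE.1.2.2 _ ht _ hμ hne).1
    have : ((a, c, b) : Λ.Path × G × Λ.Path).1 = Λ.comp μ (SS.act g α) h1 :=
      congrArg Prod.fst hteq
    rw [this] at horth
    exact lmin_ext_ne Λ μ (SS.act g α) h1 horth
  have e2 : ((a, c, b) : Λ.Path × G × Λ.Path) = (ξ, h, η) := by
    by_contra hne
    have horth := (hE.1.2.2 _ ht _ hξ hne).2
    have : ((a, c, b) : Λ.Path × G × Λ.Path).2.2 = Λ.comp η (SS.act h⁻¹ β) h2 :=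
      congrArg (fun t => t.2.2) hteq
    rw [this] at horth
    exact lmin_ext_ne Λ η (SS.act h⁻¹ β) h2 horth
  simp only [Prod.mk.injEq] at e1 e2
  obtain ⟨rfl, rfl, rfl⟩ := e1
  obtain ⟨rfl, rfl, rfl⟩ := e2
  simp only [Prod.mk.injEq] at hteq
  obtain ⟨hq1, hq2, hq3⟩ := hteq
  have hdα : Λ.deg α = 0 := by
    have := congrArg Λ.deg hq1
    rw [Λ.deg_comp, SS.deg_act] at this
    exact (left_eq_add.mp this)
  have hdβ : Λ.deg β = 0 := by
    have := congrArg Λ.deg hq3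
    rw [Λ.deg_comp, SS.deg_act] at this
    exact (left_eq_add.mp this)
  obtain ⟨hb1, hb2, hcomp, _⟩ := hαβ
  have hba : b = a := by
    have := hcomp
    rw [comp_vtx Λ b α hb1 hdα, comp_vtx Λ a β hb2 hdβ] at this
    exact this
  refine ⟨hba, ?_⟩
  have hc : c = c * c := by
    have := hq2
    rw [SS.φ_vtx _ _ hdα, SS.φ_vtx _ _ (by rw [SS.deg_act]; exact hdβ)] at this
    exact this
  exact left_eq_mul.mp hc

/-- `ι_m` is idempotent. -/
lemma iota_idem (SS : SelfSimilar k G Λ) (m : Λ.Path) : IsIdem SS (iota Λ G m) := by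
  constructor
  · refine ⟨Set.finite_singleton _, ?_, ?_⟩
    · rintro t ht
      rw [iota, Set.mem_singleton_iff] at ht
      subst ht
      simp [SS.act_one]
    · rintro t ht u hu hne
      rw [iota, Set.mem_singleton_iff] at ht hu
      exact absurd (ht.trans hu.symm) hne
  · ext t
    constructor
    · rintro ⟨μ, g, ν, ξ, h, η, α, β, hμ, hξ, hαβ, h1, h2, rfl⟩
      rw [iota, Set.mem_singleton_iff] at hμ hξ
      simp only [Prod.mk.injEq] at hμ hξ
      obtain ⟨eμ1, eμ2, eμ3⟩ := hμ
      obtain ⟨eξ1, eξ2, eξ3⟩ := hξ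
      have eμ1' := eμ1.symm; have eμ3' := eμ3.symm
      have eξ1' := eξ1.symm; have eξ3' := eξ3.symm
      subst eμ1' eμ3' eξ1' eξ3' eμ2 eξ2
      obtain ⟨hb1, hb2, hcomp, hdeg⟩ := hαβ
      have hdα : Λ.deg α = 0 := by
        rw [sup_idem] at hdeg
        exact (add_eq_left.mp hdeg)
      have hdβ : Λ.deg β = 0 := by
        have := congrArg Λ.deg hcomp
        rw [Λ.deg_comp, Λ.deg_comp, hdα, add_zero] at this
        exact (left_eq_add.mp this)
      rw [iota, Set.mem_singleton_iff]
      simp only [Prod.mk.injEq]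
      refine ⟨comp_vtx Λ m _ h1 (by rw [SS.deg_act]; exact hdα), ?_,
        comp_vtx Λ m _ h2 (by rw [SS.deg_act]; exact hdβ)⟩
      rw [phi_one, phi_one, mul_one]
    · intro ht
      rw [iota, Set.mem_singleton_iff] at ht
      subst ht
      have hr : Λ.src m = Λ.rng (Λ.src m) := (Λ.rng_vtx _ (Λ.deg_src m)).symm
      have h1 : Λ.src m = Λ.rng (SS.act 1 (Λ.src m)) := by rw [SS.act_one]; exact hr
      have h2 : Λ.src m = Λ.rng (SS.act (1:G)⁻¹ (Λ.src m)) := by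
        rw [inv_one, SS.act_one]; exact hr
      refine ⟨m, 1, m, m, 1, m, Λ.src m, Λ.src m, rfl, rfl,
        ⟨hr, hr, rfl, by rw [Λ.deg_src, add_zero, sup_idem]⟩, h1, h2, ?_⟩
      simp only [Prod.mk.injEq]
      refine ⟨(comp_vtx Λ m _ h1 (by rw [SS.deg_act]; exact Λ.deg_src m)).symm, ?_,
        (comp_vtx Λ m _ h2 (by rw [SS.deg_act]; exact Λ.deg_src m)).symm⟩
      rw [phi_one, phi_one, mul_one]

/-- The key product computation: `{(ξ,g,ξ)} · ι_{ξβ} = ι_{ξβ}` when `β` is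
strongly fixed by `g`. -/
lemma smul_single (SS : SelfSimilar k G Λ) (ξ β m : Λ.Path) (g : G)
    (hβ : Λ.src ξ = Λ.rng β) (hm : m = Λ.comp ξ β hβ)
    (hact : SS.act g β = β) (hφ : SS.φ g β = 1) :
    smul SS {(ξ, g, ξ)} (iota Λ G m) = iota Λ G m := by
  have hdm : Λ.deg m = Λ.deg ξ + Λ.deg β := by rw [hm, Λ.deg_comp]
  have hsup : Λ.deg ξ ⊔ Λ.deg m = Λ.deg m :=
    sup_eq_right.mpr (by rw [hdm]; exact self_le_add_right _ _)
  ext t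
  constructor
  · rintro ⟨μ, g', ν, ξ', h, η, α, β', hμ, hξ, hαβ, h1, h2, rfl⟩
    rw [Set.mem_singleton_iff] at hμ
    rw [iota, Set.mem_singleton_iff] at hξ
    simp only [Prod.mk.injEq] at hμ hξ
    obtain ⟨eμ1, eμ2, eμ3⟩ := hμ
    obtain ⟨eξ1, eξ2, eξ3⟩ := hξ
    have eμ1' := eμ1.symm; have eμ2' := eμ2.symm; have eμ3' := eμ3.symm
    have eξ1' := eξ1.symm; have eξ3' := eξ3.symm
    subst eμ1' eμ2' eμ3' eξ1' eξ3' eξ2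
    obtain ⟨hb1, hb2, hcomp, hdeg⟩ := hαβ
    have hdα : Λ.deg α = Λ.deg β := by
      rw [hsup, hdm] at hdeg
      exact add_left_cancel hdeg
    have hdβ' : Λ.deg β' = 0 := by
      have := congrArg Λ.deg hcomp
      rw [Λ.deg_comp, Λ.deg_comp, hdα, ← hdm] at this
      exact (left_eq_add.mp this)
    have hcm : Λ.comp ξ α hb1 = m := by
      rw [comp_vtx Λ m β' hb2 hdβ'] at hcomp
      exact hcomp
    -- unique factorization forces α = β
    obtain ⟨p, -, hup⟩ := Λ.factor m (Λ.deg ξ) (Λ.deg β) hdm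
    have e1 := hup (ξ, α) ⟨hb1, rfl, hdα, hcm⟩
    have e2 := hup (ξ, β) ⟨hβ, rfl, rfl, hm.symm⟩
    have hαβ' : α = β := congrArg Prod.snd (e1.trans e2.symm)
    subst hαβ'
    rw [iota, Set.mem_singleton_iff]
    simp only [Prod.mk.injEq]
    refine ⟨?_, ?_, comp_vtx Λ m _ h2 (by rw [SS.deg_act]; exact hdβ')⟩
    · rw [comp_congr Λ hact h1 hβ]; exact hm.symm
    · rw [hφ, phi_one, mul_one]
  · intro ht
    rw [iota, Set.mem_singleton_iff] at ht
    subst ht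
    have hr : Λ.src m = Λ.rng (Λ.src m) := (Λ.rng_vtx _ (Λ.deg_src m)).symm
    have h1 : Λ.src ξ = Λ.rng (SS.act g β) := by rw [hact]; exact hβ
    have h2 : Λ.src m = Λ.rng (SS.act (1:G)⁻¹ (Λ.src m)) := by
      rw [inv_one, SS.act_one]; exact hr
    refine ⟨ξ, g, ξ, m, 1, m, β, Λ.src m, rfl, rfl,
      ⟨hβ, hr, by rw [Λ.comp_src_id m hr]; exact hm.symm, by rw [← hdm, hsup]⟩,
      h1, h2, ?_⟩
    simp only [Prod.mk.injEq]
    refine ⟨?_, ?_, (comp_vtx Λ m _ h2 (by rw [SS.deg_act]; exact Λ.deg_src m)).symm⟩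
    · rw [comp_congr Λ hact h1 hβ]; exact hm
    · rw [hφ, phi_one, mul_one]

/-- `ι_μ ≤ {(ξ,g,η)}` in the natural partial order iff `η = ξ`,
`μ = ξβ` for some `β` with `r(β) = s(ξ)`, and `β` is strongly fixed by `g`. -/
theorem stmt6 (SS : SelfSimilar k G Λ) (hfa : Λ.FinitelyAligned)
    (μ ξ η : Λ.Path) (g : G) (hvalid : Λ.src ξ = SS.act g (Λ.src η)) :
    leS SS (iota Λ G μ) {(ξ, g, η)} ↔
      (η = ξ ∧ ∃ (β : Λ.Path) (hβ : Λ.src ξ = Λ.rng β),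
        μ = Λ.comp ξ β hβ ∧ SS.act g β = β ∧ SS.φ g β = 1) := by
  constructor
  · rintro ⟨E, hE, hprod⟩
    have hmem : ((μ, (1:G), μ) : Λ.Path × G × Λ.Path) ∈ smul SS {(ξ, g, η)} E := by
      rw [hprod]; exact rfl
    obtain ⟨μ', g', ν', ξ', h', η', α, β'', hm1, hm2, hαβ, h1, h2, heq⟩ := hmem
    rw [Set.mem_singleton_iff] at hm1
    simp only [Prod.mk.injEq] at hm1
    obtain ⟨em1, em2, em3⟩ := hm1
    have em1' := em1.symm; have em2' := em2.symm; have em3' := em3.symm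
    subst em1' em2' em3'
    obtain ⟨hsh, hh1⟩ := idem_shape SS hE _ hm2
    have hsh' : η' = ξ' := hsh
    have hh1' : h' = 1 := hh1
    subst hsh' hh1'
    simp only [Prod.mk.injEq] at heq
    obtain ⟨hq1, hq2, hq3⟩ := heq
    obtain ⟨hb1, hb2, hcomp, hdeg⟩ := hαβ
    -- μ = η' β''  and  μ = η α
    have h2' : Λ.src η' = Λ.rng β'' := by rw [inv_one, SS.act_one] at h2; exact h2
    have hq3' : μ = Λ.comp η' β'' h2' := by
      rw [hq3]; exact comp_congr Λ (by rw [inv_one, SS.act_one]) h2 h2'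
    have hμη : μ = Λ.comp η α hb1 := hq3'.trans hcomp.symm
    have hdgη : Λ.deg μ = Λ.deg η + Λ.deg α := by rw [hμη, Λ.deg_comp]
    have hdgξ : Λ.deg μ = Λ.deg ξ + Λ.deg α := by
      rw [hq1, Λ.deg_comp, SS.deg_act]
    have hdηξ : Λ.deg η = Λ.deg ξ := by
      have := hdgη.symm.trans hdgξ
      exact add_right_cancel this
    -- unique factorization: (ξ, g⬝α) = (η, α)
    obtain ⟨p, -, hup⟩ := Λ.factor μ (Λ.deg ξ) (Λ.deg α) hdgξ
    have e1 := hup (ξ, SS.act g α) ⟨h1, rfl, SS.deg_act g α, hq1.symm⟩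
    have e2 := hup (η, α) ⟨hb1, hdηξ, rfl, hμη.symm⟩
    have e12 := e1.trans e2.symm
    have hηξ : η = ξ := (congrArg Prod.fst e12).symm
    have hgαα : SS.act g α = α := congrArg Prod.snd e12
    have hφα : SS.φ g α = 1 := by
      rw [phi_one] at hq2
      rw [mul_one] at hq2
      exact hq2.symm
    refine ⟨hηξ, SS.act g α, h1, hq1, ?_, ?_⟩
    · rw [hgαα]; exact hgαα
    · rw [hgαα]; exact hφα
  · rintro ⟨heq, β, hβ, hμeq, hact, hφ⟩
    subst heq
    exact ⟨iota Λ G μ, iota_idem SS μ, smul_single SS _ β μ g hβ hμeq hact hφ⟩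
end
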